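/- The map sending a bounded multiplicative seminorm x ∈ BSC_k(X) to the family {U ∈ CO(X) : x(1_U) ≠ 0} is a homeomorphism from BSC_k(X) onto the space UF(X) of ultrafilters of the Boolean algebra of clopen subsets of X. -/

import Mathlib

open Set Topology BoundedContinuousFunction

/-- An ultrafilter of the Boolean algebra `CO(X)` of clopen subsets of `X`: a family of
clopen sets not containing `∅`, closed under binary intersections, upward closed (within
clopen sets), and containing `U` or `Uᶜ` for every clopen `U`. -/
structure ClopenUltrafilter (X : Type*) [TopologicalSpace X] where
  sets : Set (Set X)
  isClopen_of_mem : ∀ U ∈ sets, IsClopen U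
  empty_not_mem : ∅ ∉ sets
  inter_mem : ∀ U ∈ sets, ∀ V ∈ sets, U ∩ V ∈ sets
  mem_of_superset : ∀ U ∈ sets, ∀ V : Set X, IsClopen V → U ⊆ V → V ∈ sets
  mem_or_compl_mem : ∀ U : Set X, IsClopen U → U ∈ sets ∨ Uᶜ ∈ sets

/-- The topology on `UF(X)` with open basis the sets `{F : U ∈ F}` for `U` clopen. -/
instance (X : Type*) [TopologicalSpace X] : TopologicalSpace (ClopenUltrafilter X) :=
  TopologicalSpace.generateFrom
    {S | ∃ U : Set X, IsClopen U ∧ S = {F : ClopenUltrafilter X | U ∈ F.sets}}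

/-- The principal ultrafilter of clopen sets at a point `x`. -/
def principalCU (X : Type*) [TopologicalSpace X] (x : X) : ClopenUltrafilter X where
  sets := {U : Set X | IsClopen U ∧ x ∈ U}
  isClopen_of_mem := fun _ hU => hU.1
  empty_not_mem := fun h => Set.notMem_empty x h.2
  inter_mem := fun U hU V hV => ⟨hU.1.inter hV.1, hU.2, hV.2⟩
  mem_of_superset := fun U hU V hV hUV => ⟨hV, hUV hU.2⟩
  mem_or_compl_mem := fun U hU => by
    by_cases hx : x ∈ U
    · exact Or.inl ⟨hU, hx⟩
    · exact Or.inr ⟨hU.compl, hx⟩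

/-- A cluster point of an ultrafilter of clopen sets: a point all of whose clopen
neighbourhoods belong to the ultrafilter. -/
def ClopenUltrafilter.IsClusterPoint {X : Type*} [TopologicalSpace X]
    (F : ClopenUltrafilter X) (x : X) : Prop :=
  ∀ U : Set X, IsClopen U → x ∈ U → U ∈ F.sets

/-- The indicator function of a clopen set, as a bounded continuous `k`-valued function. -/
noncomputable def indicatorBCF {X : Type*} [TopologicalSpace X] (k : Type*) [NormedField k]
    {U : Set X} (hU : IsClopen U) : BoundedContinuousFunction X k where
  toFun := U.indicator 1
  continuous_toFun := continuous_indicator (by simp [hU]) continuous_const.continuousOn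
  map_bounded' := ⟨1, fun x y => by
    by_cases hx : x ∈ U <;> by_cases hy : y ∈ U <;>
      simp [hx, hy, dist_eq_norm, Set.indicator_of_mem, Set.indicator_of_notMem]⟩

/-- The family `F_m = {U ∈ CO(X) : 1_U ∉ m}` attached to an ideal `m` of `C_bd(X,k)`. -/
def idealUF {X : Type*} [TopologicalSpace X] (k : Type*) [NormedField k]
    (m : Ideal (BoundedContinuousFunction X k)) : Set (Set X) :=
  {U : Set X | ∃ hU : IsClopen U, indicatorBCF k hU ∉ m}

/-- `‖f‖_F = inf_{U ∈ F} sup_{x ∈ U} ‖f x‖`. -/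
noncomputable def ufSeminorm {X : Type*} [TopologicalSpace X] (k : Type*) [NormedField k]
    (F : ClopenUltrafilter X) (f : BoundedContinuousFunction X k) : ℝ :=
  ⨅ U ∈ F.sets, ⨆ x ∈ U, ‖f x‖

/-- A bounded multiplicative seminorm on `C_bd(X,k)`, i.e. a point of Berkovich's spectrum
`BSC_k(X) = M_k(C_bd(X,k))`. -/
structure BerkovichPoint (X : Type*) [TopologicalSpace X] (k : Type*) [NormedField k] where
  toFun : BoundedContinuousFunction X k → ℝ
  nonneg : ∀ f, 0 ≤ toFun f
  add_le : ∀ f g, toFun (f + g) ≤ max (toFun f) (toFun g)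
  mul_eq : ∀ f g, toFun (f * g) = toFun f * toFun g
  algebraMap_eq : ∀ a : k, toFun (algebraMap k (BoundedContinuousFunction X k) a) = ‖a‖
  le_norm : ∀ f, toFun f ≤ ‖f‖

/-- Berkovich's spectrum carries the topology of pointwise convergence: the weakest topology
making `x ↦ x(f)` continuous for each `f`. -/
instance (X : Type*) [TopologicalSpace X] (k : Type*) [NormedField k] :
    TopologicalSpace (BerkovichPoint X k) :=
  TopologicalSpace.induced (fun x : BerkovichPoint X k => x.toFun) Pi.topologicalSpace


/-! A Berkovich point `x` gives the clopen ultrafilter of the `U` with `x(1_U) ≠ 0`: since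
`1_U` is idempotent, `x(1_U) ∈ {0, 1}`, and `1_U + 1_{Uᶜ} = 1` rules out both values vanishing.
Conversely any ultrafilter `𝒰` on `X` gives the point `f ↦ lim_𝒰 ‖f‖`; the limit exists because
`‖f‖` takes values in a compact interval, and it is multiplicative and ultrametric because limits
are. Over an ultrametric field the level sets `{‖f‖ < c}` are clopen, so `lim_𝒰 ‖f‖` only depends
on the clopen sets in `𝒰`. This makes the two constructions inverse to each other (the key input
being that `x(f) < c` forces `x(1_{‖f‖ < c}) ≠ 0`, as `f` is invertible with inverse of norm
`≤ c⁻¹` on `{‖f‖ ≥ c}`), and makes `F ↦ lim_F ‖f‖` continuous on clopen ultrafilters, since each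
of `lim_F ‖f‖ < c` and `lim_F ‖f‖ > c` is witnessed by a single clopen set in `F`. -/

open Filter

theorem ClopenUltrafilter.ext {X : Type*} [TopologicalSpace X] {F G : ClopenUltrafilter X}
    (h : F.sets = G.sets) : F = G := by
  cases F; cases G; simpa using h

theorem BerkovichPoint.ext {X : Type*} [TopologicalSpace X] {k : Type*} [NormedField k]
    {x y : BerkovichPoint X k} (h : x.toFun = y.toFun) : x = y := by
  cases x; cases y; simpa using h

namespace ClopenUltrafilter

variable {X : Type*} [TopologicalSpace X] (F : ClopenUltrafilter X)

theorem univ_mem : Set.univ ∈ F.sets :=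
  (F.mem_or_compl_mem _ isClopen_univ).resolve_right fun h => F.empty_not_mem (by simpa using h)

theorem isOpen_setOf_mem {U : Set X} (hU : IsClopen U) :
    IsOpen {G : ClopenUltrafilter X | U ∈ G.sets} :=
  TopologicalSpace.isOpen_generateFrom_of_mem ⟨U, hU, rfl⟩

theorem mem_sets_of_forall_mem {𝒰 : Ultrafilter X} (h : ∀ U ∈ F.sets, U ∈ 𝒰) {V : Set X}
    (hV : IsClopen V) (hV𝒰 : V ∈ 𝒰) : V ∈ F.sets :=
  (F.mem_or_compl_mem V hV).resolve_right fun hc =>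
    Ultrafilter.compl_mem_iff_notMem.mp (h _ hc) hV𝒰

def toFilter : Filter X where
  sets := {S | ∃ U ∈ F.sets, U ⊆ S}
  univ_sets := ⟨_, F.univ_mem, subset_rfl⟩
  sets_of_superset := fun ⟨U, hU, hUS⟩ hST => ⟨U, hU, hUS.trans hST⟩
  inter_sets := fun ⟨U, hU, hUS⟩ ⟨V, hV, hVT⟩ =>
    ⟨U ∩ V, F.inter_mem U hU V hV, Set.inter_subset_inter hUS hVT⟩

instance : F.toFilter.NeBot :=
  ⟨fun h => by
    obtain ⟨U, hU, hU0⟩ := (Filter.ext_iff.mp h ∅).mpr trivial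
    exact F.empty_not_mem (Set.subset_empty_iff.mp hU0 ▸ hU)⟩

noncomputable def toUltrafilter : Ultrafilter X := Ultrafilter.of F.toFilter

theorem mem_toUltrafilter {U : Set X} (hU : U ∈ F.sets) : U ∈ F.toUltrafilter :=
  Ultrafilter.of_le F.toFilter ⟨U, hU, subset_rfl⟩

theorem mem_toUltrafilter_iff {U : Set X} (hU : IsClopen U) :
    U ∈ F.toUltrafilter ↔ U ∈ F.sets :=
  ⟨F.mem_sets_of_forall_mem (fun _ => F.mem_toUltrafilter) hU, F.mem_toUltrafilter⟩

theorem eventually_mem_toUltrafilter {U : Set X} (hU : IsClopen U) (h : U ∈ F.toUltrafilter) :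
    ∀ᶠ G in 𝓝 F, U ∈ G.toUltrafilter := by
  filter_upwards [(isOpen_setOf_mem hU).mem_nhds ((F.mem_toUltrafilter_iff hU).mp h)]
    with G hG using G.mem_toUltrafilter hG

end ClopenUltrafilter

namespace BoundedContinuousFunction

variable {X : Type*} [TopologicalSpace X] {E : Type*} [SeminormedAddCommGroup E]
  (𝒰 : Ultrafilter X) (f : BoundedContinuousFunction X E)

theorem exists_tendsto_norm : ∃ L, Tendsto (fun y => ‖f y‖) 𝒰 (𝓝 L) := by
  obtain ⟨L, -, hL⟩ := (isCompact_Icc (a := 0) (b := ‖f‖)).ultrafilter_le_nhds (𝒰.map _)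
    (le_principal_iff.mpr (Ultrafilter.mem_map.mpr (univ_mem' fun y =>
      ⟨norm_nonneg _, f.norm_coe_le_norm y⟩)))
  exact ⟨L, hL⟩

theorem tendsto_norm_limUnder :
    Tendsto (fun y => ‖f y‖) 𝒰 (𝓝 (limUnder (𝒰 : Filter X) fun y => ‖f y‖)) :=
  tendsto_nhds_limUnder (f.exists_tendsto_norm 𝒰)

theorem isClopen_setOf_norm_lt [IsUltrametricDist E] (c : ℝ) : IsClopen {y | ‖f y‖ < c} := by
  simpa [Set.preimage, mem_ball_zero_iff] using
    (IsUltrametricDist.isClopen_ball (0 : E) c).preimage f.continuous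

end BoundedContinuousFunction

open BoundedContinuousFunction

section IndicatorBCF

variable {X : Type*} [TopologicalSpace X] {k : Type*} [NormedField k] {U V : Set X}

@[simp]
theorem coe_indicatorBCF (hU : IsClopen U) : ⇑(indicatorBCF k hU) = U.indicator 1 := rfl

theorem indicatorBCF_empty (h : IsClopen (∅ : Set X)) : indicatorBCF k h = 0 := by
  ext; simp

theorem indicatorBCF_inter (hU : IsClopen U) (hV : IsClopen V) :
    indicatorBCF k (hU.inter hV) = indicatorBCF k hU * indicatorBCF k hV := by
  ext y; simp [Set.inter_indicator_one]

theorem indicatorBCF_mul_of_subset (hU : IsClopen U) (hV : IsClopen V) (hUV : U ⊆ V) :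
    indicatorBCF k hU * indicatorBCF k hV = indicatorBCF k hU := by
  ext y
  by_cases hy : y ∈ U
  · simp [hy, hUV hy]
  · simp [hy]

theorem indicatorBCF_add_compl (hU : IsClopen U) :
    indicatorBCF k hU + indicatorBCF k hU.compl = 1 := by
  ext y; simp [Set.indicator_self_add_compl_apply]

theorem exists_mul_eq_indicatorBCF (f : BoundedContinuousFunction X k) (hV : IsClopen V)
    {c : ℝ} (hc : 0 < c) (hf : ∀ y ∈ V, c ≤ ‖f y‖) :
    ∃ g : BoundedContinuousFunction X k, ‖g‖ ≤ c⁻¹ ∧ f * g = indicatorBCF k hV := by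
  have hf0 : ∀ y ∈ V, f y ≠ 0 := fun y hy => norm_pos_iff.mp (hc.trans_le (hf y hy))
  refine ⟨.ofNormedAddCommGroup (V.indicator fun y => (f y)⁻¹) ?_ c⁻¹ fun y => ?_,
    norm_ofNormedAddCommGroup_le _ (inv_nonneg.mpr hc.le) _, ?_⟩
  · refine continuous_indicator (by simp [hV]) ?_
    rw [hV.isClosed.closure_eq]
    exact f.continuous.continuousOn.inv₀ hf0
  · by_cases hy : y ∈ V
    · simpa [hy] using inv_anti₀ hc (hf y hy)
    · simp [hy, hc.le]
  · ext y
    by_cases hy : y ∈ V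
    · simp [hy, hf0 y hy]
    · simp [hy]

end IndicatorBCF

namespace BerkovichPoint

variable {X : Type*} [TopologicalSpace X] {k : Type*} [NormedField k]

section

variable (x : BerkovichPoint X k)

theorem map_zero : x.toFun 0 = 0 := by
  simpa using x.algebraMap_eq 0

theorem map_one : x.toFun 1 = 1 := by
  simpa using x.algebraMap_eq 1

theorem apply_indicatorBCF_eq_one {U : Set X} (hU : IsClopen U)
    (h : x.toFun (indicatorBCF k hU) ≠ 0) : x.toFun (indicatorBCF k hU) = 1 := by
  have := x.mul_eq (indicatorBCF k hU) (indicatorBCF k hU)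
  rw [indicatorBCF_mul_of_subset hU hU subset_rfl] at this
  exact (mul_left_cancel₀ h (by rw [mul_one, ← this])).symm

theorem apply_indicatorBCF_compl_ne_zero {U : Set X} (hU : IsClopen U)
    (h : x.toFun (indicatorBCF k hU) = 0) : x.toFun (indicatorBCF k hU.compl) ≠ 0 := by
  intro hc
  have := x.add_le (indicatorBCF k hU) (indicatorBCF k hU.compl)
  rw [indicatorBCF_add_compl, x.map_one, h, hc, max_self] at this
  norm_num at this

theorem apply_le_of_indicatorBCF_ne_zero {U : Set X} (hU : IsClopen U)
    (hxU : x.toFun (indicatorBCF k hU) ≠ 0) {f : BoundedContinuousFunction X k} {c : ℝ}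
    (hc : 0 ≤ c) (hf : ∀ y ∈ U, ‖f y‖ ≤ c) : x.toFun f ≤ c := by
  have hfU : ‖f * indicatorBCF k hU‖ ≤ c := (norm_le hc).mpr fun y => by
    by_cases hy : y ∈ U <;> simp [hy, hf, hc]
  calc x.toFun f = x.toFun (f * indicatorBCF k hU) := by
        rw [x.mul_eq, x.apply_indicatorBCF_eq_one hU hxU, mul_one]
    _ ≤ c := (x.le_norm _).trans hfU

theorem apply_indicatorBCF_norm_lt_ne_zero [IsUltrametricDist k]
    {f : BoundedContinuousFunction X k} {c : ℝ} (h : x.toFun f < c) :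
    x.toFun (indicatorBCF k (f.isClopen_setOf_norm_lt c)) ≠ 0 := by
  intro h0
  have hc : 0 < c := (x.nonneg f).trans_lt h
  obtain ⟨g, hg, hfg⟩ := exists_mul_eq_indicatorBCF f (f.isClopen_setOf_norm_lt c).compl hc
    fun y hy => not_lt.mp hy
  have h1 := x.apply_indicatorBCF_eq_one _ (x.apply_indicatorBCF_compl_ne_zero _ h0)
  have h2 : x.toFun f * x.toFun g < 1 :=
    calc x.toFun f * x.toFun g ≤ x.toFun f * c⁻¹ :=
          mul_le_mul_of_nonneg_left ((x.le_norm g).trans hg) (x.nonneg f)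
      _ < 1 := by rwa [← div_eq_mul_inv, div_lt_one hc]
  rw [← x.mul_eq, hfg, h1] at h2
  exact lt_irrefl _ h2

end

noncomputable def toClopenUltrafilter (x : BerkovichPoint X k) : ClopenUltrafilter X where
  sets := {U : Set X | ∃ hU : IsClopen U, x.toFun (indicatorBCF k hU) ≠ 0}
  isClopen_of_mem := fun _ hU => hU.1
  empty_not_mem := fun ⟨h, hne⟩ => hne (by rw [indicatorBCF_empty, x.map_zero])
  inter_mem := by
    rintro U ⟨hU, hxU⟩ V ⟨hV, hxV⟩
    exact ⟨hU.inter hV, by rw [indicatorBCF_inter hU hV, x.mul_eq]; exact mul_ne_zero hxU hxV⟩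
  mem_of_superset := by
    rintro U ⟨hU, hxU⟩ V hV hUV
    refine ⟨hV, fun h0 => hxU ?_⟩
    have := x.mul_eq (indicatorBCF k hU) (indicatorBCF k hV)
    rwa [indicatorBCF_mul_of_subset hU hV hUV, h0, mul_zero] at this
  mem_or_compl_mem := fun U hU => (em _).imp (fun h => ⟨hU, h⟩)
    fun h => ⟨hU.compl, x.apply_indicatorBCF_compl_ne_zero hU (not_not.mp h)⟩

theorem continuous_toClopenUltrafilter :
    Continuous (toClopenUltrafilter : BerkovichPoint X k → ClopenUltrafilter X) := by
  refine continuous_generateFrom_iff.mpr ?_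
  rintro _ ⟨U, hU, rfl⟩
  have : toClopenUltrafilter ⁻¹' {F | U ∈ F.sets} =
      {x : BerkovichPoint X k | x.toFun (indicatorBCF k hU) ≠ 0} :=
    Set.ext fun x => ⟨fun ⟨_, h⟩ => h, fun h => ⟨hU, h⟩⟩
  rw [this]
  exact isOpen_ne_fun ((continuous_apply _).comp continuous_induced_dom) continuous_const

variable [IsUltrametricDist k]

noncomputable def ofUltrafilter (𝒰 : Ultrafilter X) : BerkovichPoint X k where
  toFun f := limUnder (𝒰 : Filter X) fun y => ‖f y‖
  nonneg f := ge_of_tendsto' (f.tendsto_norm_limUnder 𝒰) fun _ => norm_nonneg _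
  add_le f g := le_of_tendsto_of_tendsto' ((f + g).tendsto_norm_limUnder 𝒰)
    ((f.tendsto_norm_limUnder 𝒰).max (g.tendsto_norm_limUnder 𝒰))
    fun y => IsUltrametricDist.norm_add_le_max (f y) (g y)
  mul_eq f g := tendsto_nhds_unique ((f * g).tendsto_norm_limUnder 𝒰) <| by
    simpa only [mul_apply, norm_mul] using
      (f.tendsto_norm_limUnder 𝒰).mul (g.tendsto_norm_limUnder 𝒰)
  algebraMap_eq a := tendsto_nhds_unique
    ((algebraMap k (BoundedContinuousFunction X k) a).tendsto_norm_limUnder 𝒰) <| by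
      simp [BoundedContinuousFunction.algebraMap_apply]
  le_norm f := le_of_tendsto' (f.tendsto_norm_limUnder 𝒰) f.norm_coe_le_norm

section OfUltrafilter

variable {𝒰 : Ultrafilter X} {f : BoundedContinuousFunction X k} {c : ℝ}

theorem tendsto_ofUltrafilter :
    Tendsto (fun y => ‖f y‖) 𝒰 (𝓝 ((ofUltrafilter 𝒰 : BerkovichPoint X k).toFun f)) :=
  f.tendsto_norm_limUnder (E := k) 𝒰

theorem ofUltrafilter_apply_le {S : Set X} (hS : S ∈ 𝒰) (hf : ∀ y ∈ S, ‖f y‖ ≤ c) :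
    (ofUltrafilter 𝒰 : BerkovichPoint X k).toFun f ≤ c :=
  le_of_tendsto tendsto_ofUltrafilter (mem_of_superset hS hf)

theorem le_ofUltrafilter_apply {S : Set X} (hS : S ∈ 𝒰) (hf : ∀ y ∈ S, c ≤ ‖f y‖) :
    c ≤ (ofUltrafilter 𝒰 : BerkovichPoint X k).toFun f :=
  ge_of_tendsto tendsto_ofUltrafilter (mem_of_superset hS hf)

theorem setOf_norm_lt_mem (h : (ofUltrafilter 𝒰 : BerkovichPoint X k).toFun f < c) :
    {y | ‖f y‖ < c} ∈ 𝒰 :=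
  tendsto_ofUltrafilter.eventually_lt_const h

theorem setOf_norm_lt_compl_mem (h : c < (ofUltrafilter 𝒰 : BerkovichPoint X k).toFun f) :
    {y | ‖f y‖ < c}ᶜ ∈ 𝒰 :=
  mem_of_superset (tendsto_ofUltrafilter.eventually_const_lt h)
    fun y (hy : c < ‖f y‖) => hy.not_gt

theorem ofUltrafilter_apply_indicatorBCF_ne_zero_iff {U : Set X} (hU : IsClopen U) :
    (ofUltrafilter 𝒰 : BerkovichPoint X k).toFun (indicatorBCF k hU) ≠ 0 ↔ U ∈ 𝒰 := by
  refine ⟨fun h => ?_, fun h => ?_⟩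
  · by_contra hU𝒰
    exact h <| le_antisymm (ofUltrafilter_apply_le (Ultrafilter.compl_mem_iff_notMem.mpr hU𝒰)
      fun y (hy : y ∉ U) => by simp [hy]) ((ofUltrafilter 𝒰).nonneg _)
  · exact (zero_lt_one.trans_le (le_ofUltrafilter_apply h fun y hy => by simp [hy])).ne'

theorem ofUltrafilter_eq_of_forall_mem (x : BerkovichPoint X k)
    (h : ∀ U ∈ x.toClopenUltrafilter.sets, U ∈ 𝒰) : ofUltrafilter 𝒰 = x := by
  refine BerkovichPoint.ext (funext fun f => le_antisymm ?_ ?_)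
  · refine le_of_forall_gt_imp_ge_of_dense fun c hc => ?_
    have hmem := h _ ⟨f.isClopen_setOf_norm_lt c, x.apply_indicatorBCF_norm_lt_ne_zero hc⟩
    exact ofUltrafilter_apply_le hmem fun y hy => le_of_lt hy
  · refine le_of_forall_gt_imp_ge_of_dense fun c hc => ?_
    have hV := f.isClopen_setOf_norm_lt c
    have hmem := x.toClopenUltrafilter.mem_sets_of_forall_mem h hV (setOf_norm_lt_mem hc)
    exact x.apply_le_of_indicatorBCF_ne_zero hV hmem.2 (((ofUltrafilter 𝒰).nonneg f).trans hc.le)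
      fun y hy => le_of_lt hy

end OfUltrafilter

theorem continuous_ofUltrafilter_toUltrafilter :
    Continuous fun F : ClopenUltrafilter X =>
      (ofUltrafilter F.toUltrafilter : BerkovichPoint X k) := by
  refine continuous_induced_rng.mpr (continuous_pi fun f => continuous_iff_continuousAt.mpr
    fun F => tendsto_order.mpr ⟨fun c hc => ?_, fun c hc => ?_⟩)
  · obtain ⟨c', hcc', hc'⟩ := exists_between hc
    filter_upwards [F.eventually_mem_toUltrafilter (f.isClopen_setOf_norm_lt c').compl
      (setOf_norm_lt_compl_mem hc')] with G hG
    exact hcc'.trans_le (le_ofUltrafilter_apply hG fun y hy => not_lt.mp hy)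
  · obtain ⟨c', hc', hcc'⟩ := exists_between hc
    filter_upwards [F.eventually_mem_toUltrafilter (f.isClopen_setOf_norm_lt c')
      (setOf_norm_lt_mem hc')] with G hG
    exact (ofUltrafilter_apply_le hG fun y hy => le_of_lt hy).trans_lt hcc'

noncomputable def homeomorphClopenUltrafilter : BerkovichPoint X k ≃ₜ ClopenUltrafilter X where
  toFun := toClopenUltrafilter
  invFun F := ofUltrafilter F.toUltrafilter
  left_inv x := x.ofUltrafilter_eq_of_forall_mem fun _ => x.toClopenUltrafilter.mem_toUltrafilter
  right_inv F := ClopenUltrafilter.ext <| Set.ext fun U =>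
    ⟨fun ⟨hU, h⟩ => (F.mem_toUltrafilter_iff hU).mp
      ((ofUltrafilter_apply_indicatorBCF_ne_zero_iff hU).mp h),
    fun h => ⟨F.isClopen_of_mem U h,
      (ofUltrafilter_apply_indicatorBCF_ne_zero_iff _).mpr (F.mem_toUltrafilter h)⟩⟩
  continuous_toFun := continuous_toClopenUltrafilter
  continuous_invFun := continuous_ofUltrafilter_toUltrafilter

end BerkovichPoint

theorem berkovichSpectrum_homeo_clopenUltrafilters_general {X : Type*} [TopologicalSpace X]
    (k : Type*) [NormedField k] [IsUltrametricDist k] :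
    ∃ e : BerkovichPoint X k ≃ₜ ClopenUltrafilter X,
      ∀ x : BerkovichPoint X k,
        (e x).sets = {U : Set X | ∃ hU : IsClopen U, x.toFun (indicatorBCF k hU) ≠ 0} :=
  ⟨BerkovichPoint.homeomorphClopenUltrafilter, fun _ => rfl⟩

/-- The map sending a bounded multiplicative seminorm `x ∈ BSC_k(X)` to
`{U ∈ CO(X) : x(1_U) ≠ 0}` is a homeomorphism from Berkovich's spectrum `BSC_k(X)` onto the
space `UF(X)` of ultrafilters of the Boolean algebra of clopen subsets of `X`. -/
theorem berkovichSpectrum_homeo_clopenUltrafilters {X : Type*} [TopologicalSpace X]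
    (k : Type*) [NormedField k] [CompleteSpace k] [IsUltrametricDist k] :
    ∃ e : BerkovichPoint X k ≃ₜ ClopenUltrafilter X,
      ∀ x : BerkovichPoint X k,
        (e x).sets = {U : Set X | ∃ hU : IsClopen U, x.toFun (indicatorBCF k hU) ≠ 0} :=
  berkovichSpectrum_homeo_clopenUltrafilters_general k
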